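/- arXiv:1109.0312 — 2 statements merged into one kernel-verified Lean document; each statement's English description precedes it below -/
import Mathlib

section
/- If two d-dimensional points p and q with natural number coordinates satisfy σ(p) ≤ σ(q) in the shuffle order, then for every coordinate k, the most significant bit position at which p_k and q_k differ is at most the maximum over all coordinates j of the most significant bit position at which p_j and q_j differ; moreover, at the coordinate achieving this maximum (ties broken appropriately), p is at most q. -/
/-!
Bit `j` of coordinate `k` sits at position `j * d + (d - 1 - k)` of `σ(p)`, and these positions
are ordered lexicographically by `(j, -k)`. If `σ(p) < σ(q)`, the highest bit where they differ
is therefore bit `j₀` of some coordinate `k₀`, with `p k₀` having a `0` and `q k₀` a `1` there,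
while all bits of all coordinates at higher shuffle positions agree. Hence every
`size (p k ^^^ q k)` is at most `j₀ + 1`, this bound is attained at `k₀`, and it is not attained
at any `k < k₀`: so `k₀` is the first maximiser, which the scan `zIdx` returns, and `p k₀ < q k₀`.
-/

/-- The shuffle (bit interleaving) of a point of `ℕ^d` with `w`-bit coordinates. -/
def natShuffle (d w : ℕ) (p : Fin d → ℕ) : ℕ :=
  ∑ j ∈ Finset.range w, ∑ k : Fin d,
    if (p k).testBit j then 2 ^ (j * d + (d - 1 - k.val)) else 0

/-- The index achieving the maximum most-significant-differing-bit position,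
with ties broken by the left-to-right scan (`Nat.size a = ⌊log₂ a⌋ + 1`). -/
def zIdx (d : ℕ) [NeZero d] (p q : Fin d → ℕ) : Fin d :=
  (List.finRange d).foldl
    (fun i j => if Nat.size (p i ^^^ q i) < Nat.size (p j ^^^ q j) then j else i)
    ⟨0, NeZero.pos d⟩

namespace Nat

theorem testBit_sum_two_pow {s : Finset ℕ} {n : ℕ} :
    (∑ i ∈ s, 2 ^ i).testBit n = true ↔ n ∈ s := by
  rw [← mem_bitIndices, ← List.mem_toFinset, Finset.toFinset_bitIndices_sum_two_pow]

theorem size_xor_le_iff {a b n : ℕ} :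
    (a ^^^ b).size ≤ n ↔ ∀ i, n ≤ i → a.testBit i = b.testBit i := by
  rw [size_le]
  refine ⟨fun h i hi => ?_, fun h => lt_pow_two_of_testBit _ fun i hi => ?_⟩
  · simpa [testBit_xor] using testBit_lt_two_pow (h.trans_le (pow_le_pow_right₀ one_le_two hi))
  · simp [testBit_xor, h i hi]

theorem exists_testBit_of_lt {a b : ℕ} (h : a < b) :
    ∃ i, a.testBit i = false ∧ b.testBit i = true ∧ ∀ j, i < j → a.testBit j = b.testBit j := by
  obtain ⟨i, hi, habove⟩ := exists_most_significant_bit (xor_ne_zero_iff.2 h.ne)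
  have hagree : ∀ j, i < j → a.testBit j = b.testBit j := fun j hj => by
    simpa [testBit_xor] using habove j hj
  have hb : b.testBit i = true := by
    by_contra hb
    exact h.not_gt (lt_of_testBit i (by simpa using hb) (by simp_all [testBit_xor])
      fun j hj => (hagree j hj).symm)
  exact ⟨i, by simpa [testBit_xor, hb] using hi, hb, hagree⟩

end Nat

namespace List

theorem argmax_cons_eq_some_foldl {α β : Type*} [LinearOrder β] (f : α → β) (a : α)
    (l : List α) :
    (a :: l).argmax f = some (l.foldl (fun i j => if f i < f j then j else i) a) := by
  suffices ∀ a, l.foldl (argAux fun b c => f c < f b) (some a) =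
      some (l.foldl (fun i j => if f i < f j then j else i) a) from this a
  induction l with
  | nil => simp
  | cons b l ih => intro a; simp only [foldl_cons, argAux, ← apply_ite some, ih]

theorem foldl_finRange_eq_of_first_max {d : ℕ} [NeZero d] {β : Type*} [LinearOrder β]
    (f : Fin d → β) (k₀ : Fin d) (hmax : ∀ k, f k ≤ f k₀) (hfirst : ∀ k < k₀, f k < f k₀) :
    (finRange d).foldl (fun i j => if f i < f j then j else i) ⟨0, NeZero.pos d⟩ = k₀ := by
  obtain ⟨n, rfl⟩ := Nat.exists_eq_succ_of_ne_zero (NeZero.ne d)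
  apply Option.some_injective
  rw [Fin.mk_zero, finRange_succ, foldl_cons, if_neg (lt_irrefl _),
    ← argmax_cons_eq_some_foldl, ← finRange_succ]
  refine argmax_eq_some_iff.2 ⟨mem_finRange k₀, fun k _ => hmax k, fun k _ hk => ?_⟩
  simp only [idxOf_finRange, Fin.val_fin_le]
  exact not_lt.1 fun hlt => (hfirst k hlt).not_ge hk

end List

def shufflePos (d j : ℕ) (k : Fin d) : ℕ := j * d + (d - 1 - k)

section Shuffle

variable {d w : ℕ} {p q : Fin d → ℕ}

theorem shufflePos_lt_shufflePos_iff {j j' : ℕ} {k k' : Fin d} :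
    shufflePos d j k < shufflePos d j' k' ↔ j < j' ∨ j = j' ∧ k' < k := by
  have hk := k.isLt
  have hk' := k'.isLt
  unfold shufflePos
  rcases lt_trichotomy j j' with hj | rfl | hj
  · have := Nat.mul_le_mul_right d hj
    rw [Nat.succ_mul] at this
    simp only [hj, true_or, iff_true]
    omega
  · simp only [lt_irrefl, true_and, false_or, Fin.lt_def]
    omega
  · have := Nat.mul_le_mul_right d hj
    rw [Nat.succ_mul] at this
    simp only [hj.not_gt, hj.ne', false_and, or_false, iff_false, not_lt]
    omega

theorem shufflePos_injective : Function.Injective fun x : ℕ × Fin d => shufflePos d x.1 x.2 := by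
  rintro ⟨j, k⟩ ⟨j', k'⟩ h
  have h₁ := (shufflePos_lt_shufflePos_iff (j := j) (j' := j') (k := k) (k' := k')).not.1 h.not_lt
  have h₂ := (shufflePos_lt_shufflePos_iff (j := j') (j' := j) (k := k') (k' := k)).not.1 h.not_gt
  simp only [not_or, not_and, not_lt] at h₁ h₂
  have hj : j = j' := le_antisymm h₂.1 h₁.1
  exact Prod.ext hj (le_antisymm (h₁.2 hj) (h₂.2 hj.symm))

theorem exists_shufflePos_eq [NeZero d] (n : ℕ) : ∃ j k, shufflePos d j k = n := by
  have := Nat.mod_lt n (NeZero.pos d)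
  refine ⟨n / d, ⟨d - 1 - n % d, by omega⟩, ?_⟩
  have := Nat.div_add_mod' n d
  simp only [shufflePos]
  omega

theorem testBit_natShuffle (j : ℕ) (k : Fin d) :
    (natShuffle d w p).testBit (shufflePos d j k) = true ↔ j < w ∧ (p k).testBit j = true := by
  have hsum : natShuffle d w p = ∑ n ∈ ((Finset.range w ×ˢ Finset.univ).filter
      fun x : ℕ × Fin d => (p x.2).testBit x.1).image (fun x => shufflePos d x.1 x.2), 2 ^ n := by
    rw [Finset.sum_image shufflePos_injective.injOn, Finset.sum_filter, Finset.sum_product]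
    rfl
  rw [hsum, Nat.testBit_sum_two_pow, shufflePos_injective.mem_finset_image (a := (j, k))]
  simp

theorem testBit_natShuffle_of_lt (hp : ∀ k, p k < 2 ^ w) (j : ℕ) (k : Fin d) :
    (natShuffle d w p).testBit (shufflePos d j k) = (p k).testBit j := by
  by_cases hj : j < w
  · exact Bool.eq_iff_iff.2 ((testBit_natShuffle j k).trans (and_iff_right hj))
  · rw [Nat.testBit_lt_two_pow ((hp k).trans_le (Nat.pow_le_pow_right two_pos (not_lt.1 hj)))]
    exact Bool.eq_false_iff.2 fun h => hj ((testBit_natShuffle j k).1 h).1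

theorem eq_of_natShuffle_eq (hp : ∀ k, p k < 2 ^ w) (hq : ∀ k, q k < 2 ^ w)
    (h : natShuffle d w p = natShuffle d w q) : p = q :=
  funext fun k => Nat.eq_of_testBit_eq fun j => by
    rw [← testBit_natShuffle_of_lt hp, ← testBit_natShuffle_of_lt hq, h]

theorem exists_testBit_of_natShuffle_lt [NeZero d] (hp : ∀ k, p k < 2 ^ w)
    (hq : ∀ k, q k < 2 ^ w) (h : natShuffle d w p < natShuffle d w q) :
    ∃ j₀ k₀, (p k₀).testBit j₀ = false ∧ (q k₀).testBit j₀ = true ∧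
      ∀ j k, shufflePos d j₀ k₀ < shufflePos d j k → (p k).testBit j = (q k).testBit j := by
  obtain ⟨n, hpn, hqn, hagree⟩ := Nat.exists_testBit_of_lt h
  obtain ⟨j₀, k₀, rfl⟩ := exists_shufflePos_eq (d := d) n
  rw [testBit_natShuffle_of_lt hp] at hpn
  rw [testBit_natShuffle_of_lt hq] at hqn
  refine ⟨j₀, k₀, hpn, hqn, fun j k hjk => ?_⟩
  rw [← testBit_natShuffle_of_lt hp, ← testBit_natShuffle_of_lt hq]
  exact hagree _ hjk

end Shuffle

/-- If `σ(p) ≤ σ(q)`, then every coordinate's most significant differing bit position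
is at most the maximum over all coordinates, and at the coordinate achieving the
maximum (ties broken by the scan), `p` is at most `q`. -/
theorem stmt4 (d w : ℕ) [NeZero d] (p q : Fin d → ℕ)
    (hp : ∀ k, p k < 2 ^ w) (hq : ∀ k, q k < 2 ^ w)
    (h : natShuffle d w p ≤ natShuffle d w q) :
    (∀ k, Nat.size (p k ^^^ q k) ≤
        Finset.univ.sup (fun j : Fin d => Nat.size (p j ^^^ q j))) ∧
      p (zIdx d p q) ≤ q (zIdx d p q) := by
  refine ⟨fun k => Finset.le_sup (f := fun j => Nat.size (p j ^^^ q j)) (Finset.mem_univ k), ?_⟩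
  rcases h.eq_or_lt with heq | hlt
  · rw [eq_of_natShuffle_eq hp hq heq]
  obtain ⟨j₀, k₀, hp₀, hq₀, hagree⟩ := exists_testBit_of_natShuffle_lt hp hq hlt
  have hsize : ∀ k, (p k ^^^ q k).size ≤ j₀ + 1 := fun k =>
    Nat.size_xor_le_iff.2 fun j hj => hagree j k (shufflePos_lt_shufflePos_iff.2 (.inl hj))
  have hsize_of_lt : ∀ k < k₀, (p k ^^^ q k).size ≤ j₀ := fun k hk =>
    Nat.size_xor_le_iff.2 fun j hj =>
      hagree j k (shufflePos_lt_shufflePos_iff.2 (hj.lt_or_eq.imp id fun h => ⟨h, hk⟩))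
  have hsize₀ : j₀ + 1 ≤ (p k₀ ^^^ q k₀).size := by
    by_contra! hsmall
    have := Nat.size_xor_le_iff.1 (Nat.lt_succ_iff.1 hsmall) j₀ le_rfl
    rw [hp₀, hq₀] at this
    exact Bool.false_ne_true this
  have hzIdx : zIdx d p q = k₀ :=
    List.foldl_finRange_eq_of_first_max _ k₀ (fun k => (hsize k).trans hsize₀)
      fun k hk => (hsize_of_lt k hk).trans_lt hsize₀
  rw [hzIdx]
  exact (Nat.lt_of_testBit j₀ hp₀ hq₀ fun j hj =>
    hagree j k₀ (shufflePos_lt_shufflePos_iff.2 (.inl hj))).le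
end

section
/- In the z-order on [0,1)^d, if a point q lies outside a quadtree cell C of level i, then σ(q) is either strictly less than σ(p) for all p ∈ C or strictly greater than σ(p) for all p ∈ C. -/
/-!
The first `d * i` binary digits of `σ(p)` are the first `i` digits of the coordinates of `p`,
interleaved; for `p ∈ [0,1)^d` those digits determine exactly the level-`i` cell containing `p`.
Since `rbit` always produces the expansion that does not end in `1`s, these digits can be read
off as `⌊2^(d i) σ(p)⌋`. So this integer is the same for all points of `C` and different for `q`,
and monotonicity of `⌊·⌋` puts `σ(q)` on one side of all of `σ(C)`.
-/

/-- The `j`-th binary digit of a real number. -/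
noncomputable def rbit (x : ℝ) (j : ℕ) : ℕ := (⌊x * 2 ^ j⌋ % 2).toNat

lemma rbit_le_one (x : ℝ) (j : ℕ) : rbit x j ≤ 1 := by
  have := Int.emod_two_eq ⌊x * 2 ^ j⌋
  unfold rbit
  omega

lemma floor_mul_two_pow_succ (x : ℝ) (j : ℕ) :
    ⌊x * 2 ^ (j + 1)⌋ = 2 * ⌊x * 2 ^ j⌋ + rbit x (j + 1) := by
  have hlo : 2 * ⌊x * 2 ^ j⌋ ≤ ⌊x * 2 ^ (j + 1)⌋ := by
    rw [Int.le_floor, pow_succ]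
    push_cast
    nlinarith [Int.floor_le (x * 2 ^ j)]
  have hhi : ⌊x * 2 ^ (j + 1)⌋ < 2 * ⌊x * 2 ^ j⌋ + 2 := by
    rw [Int.floor_lt, pow_succ]
    push_cast
    nlinarith [Int.lt_floor_add_one (x * 2 ^ j)]
  unfold rbit
  omega

lemma floor_mul_two_pow_eq_iff {x y : ℝ} (h : ⌊x⌋ = ⌊y⌋) (i : ℕ) :
    ⌊x * 2 ^ i⌋ = ⌊y * 2 ^ i⌋ ↔ ∀ j < i, rbit x (j + 1) = rbit y (j + 1) := by
  induction i with
  | zero => simpa using h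
  | succ i ih =>
    rw [floor_mul_two_pow_succ, floor_mul_two_pow_succ, Nat.forall_lt_succ_right, ← ih]
    have := rbit_le_one x (i + 1)
    have := rbit_le_one y (i + 1)
    omega

lemma exists_rbit_eq_zero (x : ℝ) (j₀ : ℕ) : ∃ j, j₀ < j ∧ rbit x j = 0 := by
  by_contra! h
  have hone : ∀ j, j₀ < j → rbit x j = 1 := fun j hj => by
    have := rbit_le_one x j
    have := h j hj
    omega
  -- The gap `ε j` to the next multiple of `2⁻ʲ`, scaled by `2ʲ`, lies in `(0, 1]` and doubles
  -- at every digit `1`.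
  set ε : ℕ → ℝ := fun j => ⌊x * 2 ^ j⌋ + 1 - x * 2 ^ j with hε
  have hε_pos : 0 < ε j₀ := by
    linarith [Int.lt_floor_add_one (x * 2 ^ j₀)]
  have hε_le : ∀ j, ε j ≤ 1 := fun j => by
    linarith [Int.floor_le (x * 2 ^ j)]
  have hdouble : ∀ r, ε (j₀ + r) = 2 ^ r * ε j₀ := by
    intro r
    induction r with
    | zero => simp
    | succ r ih =>
      have hstep : ε (j₀ + r + 1) = 2 * ε (j₀ + r) := by
        simp only [hε]
        rw [floor_mul_two_pow_succ, hone _ (by omega), pow_succ]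
        push_cast
        ring
      rw [← add_assoc, hstep, ih, pow_succ]
      ring
  obtain ⟨r, hr⟩ := pow_unbounded_of_one_lt (ε j₀)⁻¹ one_lt_two
  have := (inv_lt_iff_one_lt_mul₀ hε_pos).1 hr
  linarith [hε_le (j₀ + r), hdouble r]

noncomputable def ofBinDigits (b : ℕ → ℕ) : ℝ := ∑' n, (b n : ℝ) / 2 ^ (n + 1)

section BinaryDigits

variable {b : ℕ → ℕ}

lemma digit_div_le_geometric (hb : ∀ n, b n ≤ 1) (n : ℕ) :
    (b n : ℝ) / 2 ^ (n + 1) ≤ 1 / 2 / 2 ^ n := by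
  rw [div_div, ← pow_succ']
  gcongr
  exact_mod_cast hb n

lemma summable_ofBinDigits (hb : ∀ n, b n ≤ 1) :
    Summable fun n => (b n : ℝ) / 2 ^ (n + 1) :=
  (summable_geometric_two' 1).of_nonneg_of_le (fun _ => by positivity) (digit_div_le_geometric hb)

lemma ofBinDigits_nonneg (b : ℕ → ℕ) : 0 ≤ ofBinDigits b :=
  tsum_nonneg fun _ => by positivity

lemma ofBinDigits_lt_one (hb : ∀ n, b n ≤ 1) {n₀ : ℕ} (h₀ : b n₀ = 0) : ofBinDigits b < 1 := by
  calc ofBinDigits b < ∑' n : ℕ, (1 : ℝ) / 2 / 2 ^ n :=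
        Summable.tsum_lt_tsum_of_nonneg (i := n₀) (fun _ => by positivity)
          (digit_div_le_geometric hb) (by simp [h₀]) (summable_geometric_two' 1)
    _ = 1 := tsum_geometric_two' 1

lemma two_mul_ofBinDigits (hb : ∀ n, b n ≤ 1) :
    2 * ofBinDigits b = b 0 + ofBinDigits fun n => b (n + 1) := by
  rw [ofBinDigits, (summable_ofBinDigits hb).tsum_eq_zero_add, mul_add, ← tsum_mul_left,
    ofBinDigits]
  congr 1
  · ring
  · exact tsum_congr fun n => by rw [pow_succ _ (n + 1)]; field_simp

lemma exists_ofBinDigits_mul_two_pow (hb : ∀ n, b n ≤ 1) (N : ℕ) :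
    ∃ z : ℤ, ofBinDigits b * 2 ^ N = z + ofBinDigits fun n => b (n + N) := by
  induction N with
  | zero => exact ⟨0, by simp⟩
  | succ N ih =>
    obtain ⟨z, hz⟩ := ih
    refine ⟨2 * z + b N, ?_⟩
    rw [pow_succ, ← mul_assoc, hz, mul_comm _ (2 : ℝ), mul_add,
      two_mul_ofBinDigits fun n => hb (n + N)]
    push_cast
    simp only [zero_add, add_right_comm _ 1 N, add_assoc]

variable (hb : ∀ n, b n ≤ 1) (hzero : ∀ N, ∃ n, N ≤ n ∧ b n = 0)
include hb hzero

lemma floor_ofBinDigits_shift (N : ℕ) : ⌊ofBinDigits fun n => b (n + N)⌋ = 0 := by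
  obtain ⟨n, hn, h₀⟩ := hzero N
  refine Int.floor_eq_zero_iff.2 ⟨ofBinDigits_nonneg _, ofBinDigits_lt_one (n₀ := n - N)
    (fun _ => hb _) ?_⟩
  rwa [Nat.sub_add_cancel hn]

lemma floor_ofBinDigits : ⌊ofBinDigits b⌋ = 0 := by
  simpa using floor_ofBinDigits_shift hb hzero 0

lemma ofBinDigits_mul_two_pow (N : ℕ) :
    ofBinDigits b * 2 ^ N = ⌊ofBinDigits b * 2 ^ N⌋ + ofBinDigits fun n => b (n + N) := by
  obtain ⟨z, hz⟩ := exists_ofBinDigits_mul_two_pow hb N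
  rw [hz, Int.floor_intCast_add, floor_ofBinDigits_shift hb hzero, Int.cast_add, Int.cast_zero,
    add_zero]

lemma rbit_ofBinDigits (N : ℕ) : rbit (ofBinDigits b) (N + 1) = b N := by
  have hsplit : ofBinDigits b * 2 ^ (N + 1) =
      ((2 * ⌊ofBinDigits b * 2 ^ N⌋ + b N : ℤ) : ℝ) + ofBinDigits fun n => b (n + (N + 1)) := by
    have hhead := ofBinDigits_mul_two_pow hb hzero N
    have htail := two_mul_ofBinDigits fun n => hb (n + N)
    simp only [zero_add, add_right_comm _ 1 N, add_assoc] at htail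
    rw [pow_succ, ← mul_assoc]
    push_cast
    linarith
  have hfloor := floor_mul_two_pow_succ (ofBinDigits b) N
  rw [hsplit, Int.floor_intCast_add, floor_ofBinDigits_shift hb hzero] at hfloor
  omega

end BinaryDigits

/-- The shuffle (z-order value) of a point `p ∈ [0,1)^d`: the real number whose
binary expansion interleaves the fractional bits of the coordinates of `p`. -/
noncomputable def shuffle (d : ℕ) [NeZero d] (p : Fin d → ℝ) : ℝ :=
  ∑' m : ℕ, (rbit (p ⟨m % d, Nat.mod_lt m (NeZero.pos d)⟩) (m / d + 1) : ℝ) / 2 ^ (m + 1)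

lemma forall_lt_mul_iff_forall_fin_add_mul {d i : ℕ} {P : ℕ → Prop} :
    (∀ n < d * i, P n) ↔ ∀ k : Fin d, ∀ j < i, P (k + j * d) := by
  refine ⟨fun h k j hj => h _ ?_, fun h n hn => ?_⟩
  · nlinarith [k.isLt]
  · have hd : 0 < d := Nat.pos_of_ne_zero (by rintro rfl; simp at hn)
    have := h ⟨n % d, Nat.mod_lt n hd⟩ (n / d) ((Nat.div_lt_iff_lt_mul hd).2 (by linarith))
    rwa [Nat.mod_add_div'] at this

section Shuffle

variable {d : ℕ} [NeZero d]

noncomputable def shuffleDigit (d : ℕ) [NeZero d] (p : Fin d → ℝ) (n : ℕ) : ℕ :=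
  rbit (p ⟨n % d, Nat.mod_lt n (NeZero.pos d)⟩) (n / d + 1)

lemma shuffleDigit_add_mul (p : Fin d → ℝ) (k : Fin d) (j : ℕ) :
    shuffleDigit d p (k + j * d) = rbit (p k) (j + 1) := by
  have hmod : (k + j * d) % d = k := by rw [Nat.add_mul_mod_self_right, Nat.mod_eq_of_lt k.isLt]
  have hdiv : (k + j * d) / d = j := by
    rw [Nat.add_mul_div_right _ _ (NeZero.pos d), Nat.div_eq_of_lt k.isLt, zero_add]
  simp only [shuffleDigit, hmod, hdiv]

lemma exists_shuffleDigit_eq_zero (p : Fin d → ℝ) (N : ℕ) :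
    ∃ n, N ≤ n ∧ shuffleDigit d p n = 0 := by
  obtain ⟨j, hj, h₀⟩ := exists_rbit_eq_zero (p 0) N
  refine ⟨((0 : Fin d) : ℕ) + (j - 1) * d, ?_, ?_⟩
  · simpa using (Nat.le_sub_one_of_lt hj).trans (Nat.le_mul_of_pos_right _ (NeZero.pos d))
  · rwa [shuffleDigit_add_mul, Nat.sub_add_cancel (by omega)]

lemma rbit_shuffle (p : Fin d → ℝ) (n : ℕ) : rbit (shuffle d p) (n + 1) = shuffleDigit d p n :=
  rbit_ofBinDigits (b := shuffleDigit d p) (fun _ => rbit_le_one _ _)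
    (exists_shuffleDigit_eq_zero p) n

lemma floor_shuffle (p : Fin d → ℝ) : ⌊shuffle d p⌋ = 0 :=
  floor_ofBinDigits (b := shuffleDigit d p) (fun _ => rbit_le_one _ _)
    (exists_shuffleDigit_eq_zero p)

lemma floor_shuffle_mul_two_pow_eq_iff {p p' : Fin d → ℝ} (h : ∀ k, ⌊p k⌋ = ⌊p' k⌋) (i : ℕ) :
    ⌊shuffle d p * 2 ^ (d * i)⌋ = ⌊shuffle d p' * 2 ^ (d * i)⌋ ↔
      ∀ k, ⌊p k * 2 ^ i⌋ = ⌊p' k * 2 ^ i⌋ := by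
  rw [floor_mul_two_pow_eq_iff ((floor_shuffle p).trans (floor_shuffle p').symm)]
  simp only [rbit_shuffle, forall_lt_mul_iff_forall_fin_add_mul, shuffleDigit_add_mul,
    floor_mul_two_pow_eq_iff (h _)]

end Shuffle

lemma div_two_pow_le_and_lt_iff_floor_eq (x : ℝ) (m : ℤ) (i : ℕ) :
    ((m : ℝ) / 2 ^ i ≤ x ∧ x < ((m : ℝ) + 1) / 2 ^ i) ↔ ⌊x * 2 ^ i⌋ = m := by
  rw [Int.floor_eq_iff, div_le_iff₀ (by positivity), lt_div_iff₀ (by positivity)]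

theorem stmt12_general (d i : ℕ) [NeZero d] (q : Fin d → ℝ)
    (hq : ∀ k, q k ∈ Set.Ico (0:ℝ) 1)
    (m : Fin d → ℤ)
    (hout : ¬ ∀ k, (m k : ℝ) / 2 ^ i ≤ q k ∧ q k < ((m k : ℝ) + 1) / 2 ^ i) :
    (∀ p : Fin d → ℝ, (∀ k, p k ∈ Set.Ico (0:ℝ) 1) →
        (∀ k, (m k : ℝ) / 2 ^ i ≤ p k ∧ p k < ((m k : ℝ) + 1) / 2 ^ i) →
        shuffle d q < shuffle d p) ∨
      (∀ p : Fin d → ℝ, (∀ k, p k ∈ Set.Ico (0:ℝ) 1) →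
        (∀ k, (m k : ℝ) / 2 ^ i ≤ p k ∧ p k < ((m k : ℝ) + 1) / 2 ^ i) →
        shuffle d p < shuffle d q) := by
  simp only [div_two_pow_le_and_lt_iff_floor_eq] at hout ⊢
  by_contra! h
  obtain ⟨⟨p₁, hp₁, hc₁, h₁⟩, ⟨p₂, hp₂, hc₂, h₂⟩⟩ := h
  have hunit : ∀ {p p' : Fin d → ℝ}, (∀ k, p k ∈ Set.Ico (0:ℝ) 1) →
      (∀ k, p' k ∈ Set.Ico (0:ℝ) 1) → ∀ k, ⌊p k⌋ = ⌊p' k⌋ := fun hp hp' k =>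
    (Int.floor_eq_zero_iff.2 (hp k)).trans (Int.floor_eq_zero_iff.2 (hp' k)).symm
  have hcell : ⌊shuffle d p₁ * 2 ^ (d * i)⌋ = ⌊shuffle d p₂ * 2 ^ (d * i)⌋ :=
    (floor_shuffle_mul_two_pow_eq_iff (hunit hp₁ hp₂) i).2 fun k => (hc₁ k).trans (hc₂ k).symm
  have hq₁ : ⌊shuffle d q * 2 ^ (d * i)⌋ = ⌊shuffle d p₁ * 2 ^ (d * i)⌋ :=
    le_antisymm (hcell ▸ Int.floor_le_floor (by gcongr)) (Int.floor_le_floor (by gcongr))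
  exact hout fun k =>
    ((floor_shuffle_mul_two_pow_eq_iff (hunit hq hp₁) i).1 hq₁ k).trans (hc₁ k)

/-- If `q ∈ [0,1)^d` lies outside a level-`i` quadtree cell `C`, then `σ(q)` is
either strictly below `σ(p)` for all `p ∈ C`, or strictly above `σ(p)` for all
`p ∈ C`. -/
theorem stmt12 (d i : ℕ) [NeZero d] (q : Fin d → ℝ)
    (hq : ∀ k, q k ∈ Set.Ico (0:ℝ) 1)
    (m : Fin d → ℤ) (hm : ∀ k, 0 ≤ m k ∧ m k < 2 ^ i)
    (hout : ¬ ∀ k, (m k : ℝ) / 2 ^ i ≤ q k ∧ q k < ((m k : ℝ) + 1) / 2 ^ i) :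
    (∀ p : Fin d → ℝ, (∀ k, p k ∈ Set.Ico (0:ℝ) 1) →
        (∀ k, (m k : ℝ) / 2 ^ i ≤ p k ∧ p k < ((m k : ℝ) + 1) / 2 ^ i) →
        shuffle d q < shuffle d p) ∨
      (∀ p : Fin d → ℝ, (∀ k, p k ∈ Set.Ico (0:ℝ) 1) →
        (∀ k, (m k : ℝ) / 2 ^ i ≤ p k ∧ p k < ((m k : ℝ) + 1) / 2 ^ i) →
        shuffle d p < shuffle d q) :=
  stmt12_general d i q hq m hout
end
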